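/- Let d ≥ 2 and n ≥ 1 be integers and set δ := 1/(n+2), and let e := (1,…,1) ∈ ℝ^d. For every x ∈ S^{n+δ} with 0 ≤ x_d ≤ 1+δ, there exists a pair (v,π), with v ∈ ℤ^d admissible for n+1 and v_d = 0, such that either x ∈ k((1−δ)v, π) (type (a), used when π⁻¹(d) = d) or x ∈ k((1−δ)v + δe, π) with π⁻¹(d) < d (type (b)). -/

import Mathlib

/-- The right `d`-simplex `S^α = {x ∈ ℝ^d : α ≥ x_1 ≥ x_2 ≥ … ≥ x_d ≥ 0}`
(coordinates indexed by `Fin d`, in order). -/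
def Sset (d : ℕ) (α : ℝ) : Set (Fin d → ℝ) :=
  {x | (∀ i : Fin d, 0 ≤ x i ∧ x i ≤ α) ∧ ∀ i j : Fin d, i ≤ j → x j ≤ x i}

/-- The Kuhn simplex `k(v,π) = {x : 1 ≥ (x−v)_{π(1)} ≥ … ≥ (x−v)_{π(d)} ≥ 0}`. -/
def kuhn (d : ℕ) (v : Fin d → ℝ) (π : Equiv.Perm (Fin d)) : Set (Fin d → ℝ) :=
  {x | (∀ i : Fin d, 0 ≤ x (π i) - v (π i) ∧ x (π i) - v (π i) ≤ 1) ∧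
       ∀ i j : Fin d, i ≤ j → x (π j) - v (π j) ≤ x (π i) - v (π i)}

/-- `(v,π)` with `v ∈ ℤ^d` is admissible for `m` if `v ∈ S^{m-1}` and whenever
`v_j = v_{j+1}`, `j` precedes `j+1` in `π`, i.e. `π⁻¹(j) < π⁻¹(j+1)`. -/
def admissible (d m : ℕ) (v : Fin d → ℤ) (π : Equiv.Perm (Fin d)) : Prop :=
  ((fun i => (v i : ℝ)) ∈ Sset d ((m : ℝ) - 1)) ∧
  ∀ (j : Fin d) (h : (j : ℕ) + 1 < d),
    v j = v ⟨(j : ℕ) + 1, h⟩ → π.symm j < π.symm ⟨(j : ℕ) + 1, h⟩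

/-!
Put `s = 1 - δ` and give each coordinate the level `c_i = ⌈(x_i - 1) / s⌉₊`, the least `k ≥ 0`
with `x_i - s k ≤ 1`; the levels are antitone and at most `n`.
If `x_d ≤ 1`, the residuals `x_i - s c_i` lie in `[0, 1]` and `c_d = 0`; sorting the residuals
decreasingly, ties in index order, gives a Kuhn simplex of type (a) containing `x`, and since `x`
is antitone, equal levels have residuals in index order, which is admissibility.
If `x_d > 1`, all `x_i > 1`, so the residuals `x_i - s c_i - δ` lie in `(0, s]`; resetting
`c_d := 0` makes the last residual `x_d - δ > s` the largest one, so `d` is sorted first and the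
simplex is of type (b).
-/

namespace Tuple

variable {n : ℕ} {α : Type*} [LinearOrder α] {f : Fin n → α} {i j : Fin n}

theorem sort_symm_lt_sort_symm_iff :
    (sort f).symm i < (sort f).symm j ↔ toLex (f i, i) < toLex (f j, j) := by
  rw [← (eq_sort_iff'.mp (rfl : sort f = sort f)).lt_iff_lt]
  simp only [graphEquiv₁, Equiv.trans_apply, Equiv.apply_symm_apply, Equiv.coe_fn_mk]
  rfl

theorem sort_symm_lt_sort_symm_of_lt (h : f i < f j) : (sort f).symm i < (sort f).symm j :=
  sort_symm_lt_sort_symm_iff.mpr (Prod.Lex.toLex_lt_toLex.mpr (Or.inl h))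

theorem sort_symm_lt_sort_symm_of_le (hij : i < j) (h : f i ≤ f j) :
    (sort f).symm i < (sort f).symm j :=
  sort_symm_lt_sort_symm_iff.mpr (Prod.Lex.toLex_lt_toLex.mpr (h.lt_or_eq.imp_right (⟨·, hij⟩)))

end Tuple

section Kuhn

variable {d : ℕ}

/-- `Tuple.sort (w - x)` lists the indices by decreasing residual `x - w`, ties in index order. -/
theorem mem_kuhn_sort {x w : Fin d → ℝ} (h : ∀ i, x i - w i ∈ Set.Icc 0 1) :
    x ∈ kuhn d w (Tuple.sort (w - x)) := by
  refine ⟨fun i => h _, fun i j hij => ?_⟩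
  have := Tuple.monotone_sort (w - x) hij
  simp only [Function.comp_apply, Pi.sub_apply] at this
  linarith

theorem natCast_mem_Sset {c : Fin d → ℕ} {n : ℕ} (hc : Antitone c) (hn : ∀ i, c i ≤ n) :
    (fun i => ((c i : ℤ) : ℝ)) ∈ Sset d (((n + 1 : ℕ) : ℝ) - 1) := by
  refine ⟨fun i => ⟨by positivity, ?_⟩, fun i j hij => ?_⟩
  · push_cast
    simpa using hn i
  · exact Int.cast_le.mpr (Int.ofNat_le.mpr (hc hij))

theorem admissible_sort {m : ℕ} {v : Fin d → ℤ} (g : ℤ → ℝ) {x : Fin d → ℝ}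
    (hv : (fun i => (v i : ℝ)) ∈ Sset d ((m : ℝ) - 1)) (hx : Antitone x) :
    admissible d m v (Tuple.sort ((fun i => g (v i)) - x)) := by
  refine ⟨hv, fun j hj hvj => Tuple.sort_symm_lt_sort_symm_of_le (Fin.lt_def.mpr (by simp)) ?_⟩
  have := hx (Fin.le_def.mpr (by simp) : j ≤ ⟨j + 1, hj⟩)
  simp only [Pi.sub_apply, hvj]
  linarith

end Kuhn

section CeilIndex

variable {s t : ℝ}

theorem sub_mul_natCeil_le_one (hs : 0 < s) (t : ℝ) : t - s * ⌈(t - 1) / s⌉₊ ≤ 1 := by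
  have := Nat.le_ceil ((t - 1) / s)
  rw [div_le_iff₀ hs] at this
  linarith

theorem one_sub_lt_sub_mul_natCeil (hs : 0 < s) (ht : 1 < t) :
    1 - s < t - s * ⌈(t - 1) / s⌉₊ := by
  have hceil := Nat.ceil_lt_add_one (div_nonneg (sub_nonneg.mpr ht.le) hs.le)
  have := mul_lt_mul_of_pos_left hceil hs
  rw [mul_add, mul_div_cancel₀ _ hs.ne'] at this
  linarith

theorem natCeil_eq_zero_of_le_one (hs : 0 ≤ s) (ht : t ≤ 1) : ⌈(t - 1) / s⌉₊ = 0 :=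
  Nat.ceil_eq_zero.mpr (div_nonpos_of_nonpos_of_nonneg (by linarith) hs)

theorem sub_mul_natCeil_mem_Icc (hs : 0 < s) (hs1 : s ≤ 1) (ht : 0 ≤ t) :
    t - s * ⌈(t - 1) / s⌉₊ ∈ Set.Icc 0 1 := by
  refine ⟨?_, sub_mul_natCeil_le_one hs t⟩
  rcases le_or_gt t 1 with h | h
  · simpa [natCeil_eq_zero_of_le_one hs.le h] using ht
  · linarith [one_sub_lt_sub_mul_natCeil hs h]

theorem natCeil_le_iff (hs : 0 < s) {n : ℕ} : ⌈(t - 1) / s⌉₊ ≤ n ↔ t ≤ 1 + n * s := by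
  rw [Nat.ceil_le, div_le_iff₀ hs]
  constructor <;> intro h <;> linarith

theorem antitone_natCeil {d : ℕ} (hs : 0 < s) {x : Fin d → ℝ} (hx : Antitone x) :
    Antitone fun i => ⌈(x i - 1) / s⌉₊ :=
  fun _ _ hij => Nat.ceil_mono (div_le_div_of_nonneg_right (by linarith [hx hij]) hs.le)

end CeilIndex

theorem Antitone.update_bot_of_isTop {ι α : Type*} [PartialOrder ι] [DecidableEq ι] [Preorder α]
    [OrderBot α] {f : ι → α} (hf : Antitone f) {k : ι} (hk : IsTop k) :
    Antitone (Function.update f k ⊥) := by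
  intro i j hij
  rcases eq_or_ne j k with rfl | hj
  · simp
  · have hi : i ≠ k := fun hi => hj (le_antisymm (hk j) (hi ▸ hij))
    simpa [Function.update_of_ne hi, Function.update_of_ne hj] using hf hij

section Cover

variable {d n : ℕ} {δ : ℝ} {x : Fin d → ℝ} {last : Fin d}

theorem exists_admissible_mem_kuhn_of_le_one (hδ0 : 0 ≤ δ) (hδ1 : δ < 1)
    (hx : x ∈ Sset d ((n : ℝ) + δ)) (hxn : ∀ i, ⌈(x i - 1) / (1 - δ)⌉₊ ≤ n)
    (hlast : x last ≤ 1) :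
    ∃ (v : Fin d → ℤ) (π : Equiv.Perm (Fin d)), admissible d (n + 1) v π ∧ v last = 0 ∧
      x ∈ kuhn d (fun i => (1 - δ) * (v i : ℝ)) π := by
  have hs : 0 < 1 - δ := by linarith
  exact ⟨fun i => ⌈(x i - 1) / (1 - δ)⌉₊, _,
    admissible_sort (fun k => (1 - δ) * k) (natCast_mem_Sset (antitone_natCeil hs hx.2) hxn) hx.2,
    by simp [natCeil_eq_zero_of_le_one hs.le hlast],
    mem_kuhn_sort fun i => sub_mul_natCeil_mem_Icc hs (by linarith) (hx.1 i).1⟩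

theorem exists_admissible_mem_kuhn_add_of_one_lt (hδ1 : δ < 1) (hx : Antitone x)
    (hxn : ∀ i, ⌈(x i - 1) / (1 - δ)⌉₊ ≤ n) (hle_last : IsTop last) {i₀ : Fin d}
    (hi₀ : i₀ ≠ last) (hlast : 1 < x last) (hlast' : x last ≤ 1 + δ) :
    ∃ (v : Fin d → ℤ) (π : Equiv.Perm (Fin d)), admissible d (n + 1) v π ∧ v last = 0 ∧
      x ∈ kuhn d (fun i => (1 - δ) * (v i : ℝ) + δ) π ∧ π.symm last < last := by
  have hs : 0 < 1 - δ := by linarith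
  set c : Fin d → ℕ := Function.update (fun i => ⌈(x i - 1) / (1 - δ)⌉₊) last 0
  have hres (i : Fin d) (hi : i ≠ last) :
      x i - ((1 - δ) * ((c i : ℤ) : ℝ) + δ) ∈ Set.Ioc 0 (1 - δ) := by
    have h1 := one_sub_lt_sub_mul_natCeil hs (hlast.trans_le (hx (hle_last i)))
    have h2 := sub_mul_natCeil_le_one hs (x i)
    simp only [c, Function.update_of_ne hi, Int.cast_natCast]
    constructor <;> linarith
  have hres_last : x last - ((1 - δ) * ((c last : ℤ) : ℝ) + δ) ∈ Set.Ioc (1 - δ) 1 := by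
    simp only [c, Function.update_self, Nat.cast_zero, Int.cast_zero]
    constructor <;> linarith
  set π := Tuple.sort ((fun i => (1 - δ) * ((c i : ℤ) : ℝ) + δ) - x)
  have hπ_last : π.symm last < π.symm i₀ :=
    Tuple.sort_symm_lt_sort_symm_of_lt <| by
      simp only [Pi.sub_apply]
      linarith [(hres _ hi₀).2, hres_last.1]
  have hc_le (i : Fin d) : c i ≤ n := by
    rcases eq_or_ne i last with rfl | hi
    · simp [c]
    · simpa [c, hi] using hxn i
  refine ⟨fun i => c i, π, admissible_sort (fun k => (1 - δ) * k + δ)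
    (natCast_mem_Sset ((antitone_natCeil hs hx).update_bot_of_isTop hle_last) hc_le) hx,
    by simp [c], mem_kuhn_sort fun i => ?_, hπ_last.trans_le (hle_last _)⟩
  rcases eq_or_ne i last with rfl | hi
  · exact ⟨by linarith [hres_last.1], hres_last.2⟩
  · exact ⟨(hres i hi).1.le, by linarith [(hres i hi).2]⟩

end Cover

/-- every `x` in the base `{x ∈ S^{n+δ} : 0 ≤ x_d ≤ 1+δ}` is covered by
a simplex of type (a), `k((1-δ)v, π)`, or of type (b), `k((1-δ)v + δe, π)` with
`π⁻¹(d) < d`, for some pair `(v,π)` admissible for `n+1` with `v_d = 0`. -/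
theorem base_point_cover (d n : ℕ) (hd : 2 ≤ d)
    (δ : ℝ) (hδ : δ = ((n : ℝ) + 2)⁻¹)
    (x : Fin d → ℝ) (hx : x ∈ Sset d ((n : ℝ) + δ))
    (hxd : x ⟨d - 1, by omega⟩ ≤ 1 + δ) :
    ∃ (v : Fin d → ℤ) (π : Equiv.Perm (Fin d)),
      admissible d (n + 1) v π ∧ v ⟨d - 1, by omega⟩ = 0 ∧
      (x ∈ kuhn d (fun i => (1 - δ) * (v i : ℝ)) π ∨
        (x ∈ kuhn d (fun i => (1 - δ) * (v i : ℝ) + δ) π ∧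
          π.symm ⟨d - 1, by omega⟩ < ⟨d - 1, by omega⟩)) := by
  have hδ0 : 0 < δ := hδ ▸ by positivity
  have hδn : δ * (n + 2) = 1 := hδ ▸ inv_mul_cancel₀ (by positivity)
  have hδ1 : δ < 1 := by nlinarith
  -- `x_i ≤ n + δ ≤ 1 + n (1 - δ)` because `(n + 1) δ < 1`
  have hxn (i : Fin d) : ⌈(x i - 1) / (1 - δ)⌉₊ ≤ n :=
    (natCeil_le_iff (by linarith)).mpr (by nlinarith [(hx.1 i).2])
  rcases le_or_gt (x ⟨d - 1, by omega⟩) 1 with hlast | hlast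
  · obtain ⟨v, π, hadm, hv, hmem⟩ := exists_admissible_mem_kuhn_of_le_one hδ0.le hδ1 hx hxn hlast
    exact ⟨v, π, hadm, hv, Or.inl hmem⟩
  · obtain ⟨v, π, hadm, hv, hmem, hπ⟩ := exists_admissible_mem_kuhn_add_of_one_lt hδ1 hx.2 hxn
      (fun i => Fin.le_def.mpr (Nat.le_sub_one_of_lt i.2)) (i₀ := ⟨0, by omega⟩)
      (Fin.ne_of_val_ne (by simp only; omega)) hlast hxd
    exact ⟨v, π, hadm, hv, Or.inr ⟨hmem, hπ⟩⟩
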